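/- arXiv:1511.08355 — 3 statements merged into one kernel-verified Lean document; each statement's English description precedes it below -/
import Mathlib

section
/- For all ρ > 0, the function Λ(ρ) = e^{-ρ} - (1+ρ)e^{-2ρ} satisfies Λ(ρ) < e^{-2}. -/
/-!
Multiplying by `exp (2ρ)`, the claim becomes `exp ρ - 1 - ρ < exp (2ρ - 2)`. The function
`x ↦ exp (2x - 2) - exp x + x` is strictly increasing: with `y = exp (x - 1)` its derivative is
`2y² - e·y + 1`, whose discriminant `e² - 8` is negative. Comparing its values at `0` and `ρ`
gives the inequality.
-/

open Real

lemma two_mul_exp_two_mul_sub_two_sub_exp_add_one_pos (x : ℝ) :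
    0 < 2 * exp (2 * x - 2) - exp x + 1 := by
  have hsq : exp (2 * x - 2) = exp (x - 1) ^ 2 := by rw [← exp_nat_mul]; ring_nf
  have hmul : exp x = exp 1 * exp (x - 1) := by rw [← exp_add]; ring_nf
  have he : exp 1 < 2.7182818286 := exp_one_lt_d9
  rw [hsq, hmul]
  nlinarith [sq_nonneg (4 * exp (x - 1) - exp 1), exp_pos 1]

lemma strictMono_exp_two_mul_sub_two_sub_exp_add_id :
    StrictMono fun x : ℝ => exp (2 * x - 2) - exp x + x := by
  refine strictMono_of_hasDerivAt_pos (fun x => ?_) two_mul_exp_two_mul_sub_two_sub_exp_add_one_pos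
  have hlin : HasDerivAt (fun x : ℝ => 2 * x - 2) 2 x := by
    simpa using ((hasDerivAt_id x).const_mul 2).sub_const 2
  exact ((hlin.exp.sub (hasDerivAt_exp x)).add (hasDerivAt_id x)).congr_deriv (by ring)

lemma exp_sub_one_sub_lt_exp_two_mul_sub_two {ρ : ℝ} (hρ : 0 < ρ) :
    exp ρ - 1 - ρ < exp (2 * ρ - 2) := by
  have h := strictMono_exp_two_mul_sub_two_sub_exp_add_id hρ
  norm_num at h
  linarith [exp_pos (-2)]

theorem Lambda_lt_exp_neg_two
    (Λ : ℝ → ℝ) (hΛ : ∀ ρ : ℝ, Λ ρ = Real.exp (-ρ) - (1 + ρ) * Real.exp (-2 * ρ)) :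
    ∀ ρ : ℝ, 0 < ρ → Λ ρ < Real.exp (-2) := by
  intro ρ hρ
  calc Λ ρ = (exp ρ - 1 - ρ) * exp (-2 * ρ) := by
        rw [hΛ, sub_mul, sub_mul, ← exp_add]; ring_nf
    _ < exp (2 * ρ - 2) * exp (-2 * ρ) := by
        gcongr; exact exp_sub_one_sub_lt_exp_two_mul_sub_two hρ
    _ = exp (-2) := by rw [← exp_add]; ring_nf
end

section
/- (Boundedness of pseudo-covariance) Suppose P_{k|k-1} = P_{k-1|k-2}·(1 - 1/(1+φ_{k-1})) + Q_{k-1} with P_{1|0} = P_{0|0} + Q_0 > 0, and suppose 0 < Q_k ≤ q̄ and 0 < φ_k ≤ φ̄ for all k. Then for every k ≥ 1, Q_{k-1} ≤ P_{k|k-1} ≤ (P_{0|0} + Q_0)·(1 - 1/(1+φ̄))^{k-1} + q̄·φ̄ + Q_{k-1}. -/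
/-!
Writing `x n = P (n + 1)`, the recursion is the affine recurrence
`x (n + 1) = x n * a n + Q (n + 1)` with gains `a n = φ/(1+φ) ∈ [0, r]`, `r = φ̄/(1+φ̄)`.
Nonnegative gains keep `x n ≥ Q n`. For the upper bound, `S = q̄ φ̄` satisfies
`(S + q̄) r = S`, so one step maps the bound `x₀ rⁿ + S + Q n` to
`x₀ rⁿ⁺¹ + (S + q̄) r + Q (n + 1) = x₀ rⁿ⁺¹ + S + Q (n + 1)`.
-/

section AffineRecurrence

variable {x a c : ℕ → ℝ}

theorem forcing_le_of_affine_rec (hrec : ∀ n, x (n + 1) = x n * a n + c (n + 1))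
    (ha : ∀ n, 0 ≤ a n) (hc : ∀ n, 0 ≤ c n) (h0 : c 0 ≤ x 0) (n : ℕ) : c n ≤ x n := by
  induction n with
  | zero => exact h0
  | succ n ih =>
    rw [hrec n]
    have : 0 ≤ x n * a n := mul_nonneg ((hc n).trans ih) (ha n)
    linarith

theorem le_pow_mul_add_of_affine_rec {r B S : ℝ}
    (hrec : ∀ n, x (n + 1) = x n * a n + c (n + 1))
    (ha : ∀ n, 0 ≤ a n) (hc : ∀ n, 0 ≤ c n) (h0 : c 0 ≤ x 0)
    (har : ∀ n, a n ≤ r) (hcB : ∀ n, c n ≤ B) (hS : 0 ≤ S) (hSr : (S + B) * r ≤ S) (n : ℕ) :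
    x n ≤ x 0 * r ^ n + S + c n := by
  have hr : 0 ≤ r := (ha 0).trans (har 0)
  induction n with
  | zero => simp only [pow_zero, mul_one]; linarith [hc 0]
  | succ n ih =>
    have hx : 0 ≤ x n := (hc n).trans (forcing_le_of_affine_rec hrec ha hc h0 n)
    calc x (n + 1) = x n * a n + c (n + 1) := hrec n
      _ ≤ (x 0 * r ^ n + S + c n) * r + c (n + 1) := by
        gcongr ?_ + _
        exact mul_le_mul ih (har n) (ha n) (hx.trans ih)
      _ = x 0 * r ^ (n + 1) + (S + c n) * r + c (n + 1) := by ring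
      _ ≤ x 0 * r ^ (n + 1) + (S + B) * r + c (n + 1) := by gcongr; exact hcB n
      _ ≤ x 0 * r ^ (n + 1) + S + c (n + 1) := by linarith

end AffineRecurrence

theorem one_sub_one_div_one_add_nonneg {φ : ℝ} (hφ : 0 ≤ φ) : 0 ≤ 1 - 1 / (1 + φ) := by
  rw [sub_nonneg, div_le_one (by linarith)]
  linarith

theorem one_sub_one_div_one_add_le {φ ψ : ℝ} (hφ : 0 ≤ φ) (hφψ : φ ≤ ψ) :
    1 - 1 / (1 + φ) ≤ 1 - 1 / (1 + ψ) := by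
  gcongr

theorem mul_add_mul_one_sub_one_div_one_add {q φ : ℝ} (hφ : 0 ≤ φ) :
    (q * φ + q) * (1 - 1 / (1 + φ)) = q * φ := by
  field_simp
  ring

theorem pseudo_covariance_bounds
    (P Q φ : ℕ → ℝ) (P₀ qbar phibar : ℝ)
    (hP₀ : 0 < P₀) (hqbar : 0 < qbar) (hphibar : 0 < phibar)
    (hP1 : P 1 = P₀ + Q 0)
    (hrec : ∀ k : ℕ, 2 ≤ k → P k = P (k - 1) * (1 - 1 / (1 + φ (k - 1))) + Q (k - 1))
    (hQ : ∀ k, 0 < Q k ∧ Q k ≤ qbar)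
    (hφ : ∀ k, 0 < φ k ∧ φ k ≤ phibar) :
    ∀ k : ℕ, 1 ≤ k →
      Q (k - 1) ≤ P k ∧
      P k ≤ (P₀ + Q 0) * (1 - 1 / (1 + phibar)) ^ (k - 1) + qbar * phibar + Q (k - 1) := by
  intro k hk
  obtain ⟨n, rfl⟩ : ∃ n, k = n + 1 := ⟨k - 1, by omega⟩
  rw [Nat.add_sub_cancel]
  have hrec' : ∀ n, P (n + 1 + 1) = P (n + 1) * (1 - 1 / (1 + φ (n + 1))) + Q (n + 1) :=
    fun n => hrec (n + 2) (by omega)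
  have ha : ∀ n, 0 ≤ 1 - 1 / (1 + φ (n + 1)) :=
    fun n => one_sub_one_div_one_add_nonneg (hφ (n + 1)).1.le
  have hc : ∀ n, 0 ≤ Q n := fun n => (hQ n).1.le
  have h0 : Q 0 ≤ P (0 + 1) := by rw [hP1]; linarith
  refine ⟨forcing_le_of_affine_rec (x := fun n => P (n + 1)) hrec' ha hc h0 n, ?_⟩
  rw [← hP1]
  exact le_pow_mul_add_of_affine_rec (x := fun n => P (n + 1)) hrec' ha hc h0
    (fun n => one_sub_one_div_one_add_le (hφ (n + 1)).1.le (hφ (n + 1)).2)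
    (fun n => (hQ n).2) (by positivity)
    (mul_add_mul_one_sub_one_div_one_add hphibar.le).le n
end

section
/- (Case 2 of region analysis) Let ς ∈ (0,1) and φ = 1/(4(1+ς)). If a' ∈ (1, 2) and a = 2 - a', then the inequality |a' - 1|·(4a·φ + |a'-1|) ≤ 4ς·a²·φ holds if and only if a' ≤ (1+3ς)/(1+2ς). -/
/-!
Multiplying by `4 (1 + ς) > 0` clears `φ`, and writing `x = a' - 1`, `a = 1 - x`, the quadratic
terms cancel: `x a + (1 + ς) x² - ς a² = (1 + 2ς) x - ς`. The region is therefore the half-line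
`x ≤ ς / (1 + 2ς)`.
-/

theorem mul_add_le_iff_of_eq_one_div {s φ x a : ℝ} (hs : 0 < 1 + s)
    (hφ : φ = 1 / (4 * (1 + s))) :
    x * (4 * a * φ + x) ≤ 4 * s * a ^ 2 * φ ↔ x * a + (1 + s) * x ^ 2 ≤ s * a ^ 2 := by
  have hlhs : x * (4 * a * φ + x) = (x * a + (1 + s) * x ^ 2) / (1 + s) := by
    subst hφ; field_simp
  have hrhs : 4 * s * a ^ 2 * φ = s * a ^ 2 / (1 + s) := by
    subst hφ; field_simp
  rw [hlhs, hrhs, div_le_div_iff_of_pos_right hs]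

theorem mul_one_sub_add_le_iff {s x : ℝ} (hs : 0 < 1 + 2 * s) :
    x * (1 - x) + (1 + s) * x ^ 2 ≤ s * (1 - x) ^ 2 ↔ x ≤ s / (1 + 2 * s) := by
  have hlinear : x * (1 - x) + (1 + s) * x ^ 2 - s * (1 - x) ^ 2 = x * (1 + 2 * s) - s := by ring
  rw [← sub_nonpos, hlinear, sub_nonpos, le_div_iff₀ hs]

theorem region_case2_general
    (ς φ a' a : ℝ) (hς0 : 0 < ς)
    (hφ : φ = 1 / (4 * (1 + ς)))
    (ha'1 : 1 < a') (ha : a = 2 - a') :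
    |a' - 1| * (4 * a * φ + |a' - 1|) ≤ 4 * ς * a ^ 2 * φ ↔
      a' ≤ (1 + 3 * ς) / (1 + 2 * ς) := by
  have hx : a = 1 - (a' - 1) := by linarith
  have hbound : (1 + 3 * ς) / (1 + 2 * ς) = ς / (1 + 2 * ς) + 1 := by
    field_simp; ring
  rw [abs_of_pos (sub_pos.2 ha'1), mul_add_le_iff_of_eq_one_div (by linarith) hφ, hx,
    mul_one_sub_add_le_iff (by linarith), hbound, sub_le_iff_le_add]

theorem region_case2
    (ς φ a' a : ℝ) (hς0 : 0 < ς) (hς1 : ς < 1)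
    (hφ : φ = 1 / (4 * (1 + ς)))
    (ha'1 : 1 < a') (ha'2 : a' < 2) (ha : a = 2 - a') :
    |a' - 1| * (4 * a * φ + |a' - 1|) ≤ 4 * ς * a ^ 2 * φ ↔
      a' ≤ (1 + 3 * ς) / (1 + 2 * ς) :=
  region_case2_general ς φ a' a hς0 hφ ha'1 ha
end
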